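/- arXiv:1307.0597 — 2 statements merged into one kernel-verified Lean document; each statement's English description precedes it below -/
import Mathlib

section
/- For every network satisfying the standing assumptions, every synaptical unit U satisfies 1 ≤ |U| ≤ l − 1, where l is the number of homogeneous parts of the network. (Proposition 'Units', part (iii).) -/
namespace NeuralNet

open Classical

/-- Neurons `i` and `j` are *structurally identical*: `i = j`, or else the intrinsic
dynamics labels coincide, the mutual synaptic actions vanish, and every other neuron
acts equally on both. -/
def StructId {α : Type*} {N : ℕ} (F : Fin N → α) (Δ : Fin N → Fin N → ℝ)
    (i j : Fin N) : Prop :=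
  i = j ∨ (F i = F j ∧ Δ i j = 0 ∧ Δ j i = 0 ∧ ∀ h, h ≠ i → h ≠ j → Δ h i = Δ h j)

/-- A *homogeneous part* is an equivalence class of the structural-identity relation. -/
def IsHomPart {α : Type*} {N : ℕ} (F : Fin N → α) (Δ : Fin N → Fin N → ℝ)
    (A : Set (Fin N)) : Prop :=
  ∃ i, A = {j | StructId F Δ i j}

/-- A subset `U` of a homogeneous part `A` is a *unit-candidate* if for every neuron
`h ∉ A` there is at most one `i ∈ U` with `Δ i h ≠ 0`. -/
def UnitCandidate {N : ℕ} (Δ : Fin N → Fin N → ℝ) (A U : Set (Fin N)) : Prop :=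
  U ⊆ A ∧ ∀ h ∉ A, ∀ i ∈ U, ∀ j ∈ U, Δ i h ≠ 0 → Δ j h ≠ 0 → i = j

/-- A partition of the homogeneous part `A` into nonempty unit-candidates. -/
def IsUnitPartition {N : ℕ} (Δ : Fin N → Fin N → ℝ) (A : Set (Fin N))
    (P : Set (Set (Fin N))) : Prop :=
  (∀ U ∈ P, U.Nonempty ∧ UnitCandidate Δ A U) ∧ P.PairwiseDisjoint id ∧ ⋃₀ P = A

/-- A *synaptical unit* is a member of a partition of some homogeneous part `A` into
nonempty unit-candidates whose number of parts is minimal. -/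
def IsSynapticalUnit {α : Type*} {N : ℕ} (F : Fin N → α) (Δ : Fin N → Fin N → ℝ)
    (U : Set (Fin N)) : Prop :=
  ∃ A P, IsHomPart F Δ A ∧ IsUnitPartition Δ A P ∧
    (∀ Q, IsUnitPartition Δ A Q → P.ncard ≤ Q.ncard) ∧ U ∈ P

/-- `deltaIB Δ i B` : the common value of `Δ i h` over `h ∈ B` (defined by choice of a
representative of `B`; it is well-defined when `B` is a homogeneous part). -/
noncomputable def deltaIB {N : ℕ} (Δ : Fin N → Fin N → ℝ) (i : Fin N)
    (B : Set (Fin N)) : ℝ :=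
  if hB : B.Nonempty then Δ i hB.choose else 0

/-- `deltaUB Δ U B` : the inter-unit weight `Δ_{U,B}`; it is `0` if `deltaIB Δ i B = 0`
for every `i ∈ U`, and otherwise the value `deltaIB Δ i B` for a chosen `i ∈ U` with
nonzero value (unique when `U` is a unit-candidate and `B` a homogeneous part). -/
noncomputable def deltaUB {N : ℕ} (Δ : Fin N → Fin N → ℝ) (U B : Set (Fin N)) : ℝ :=
  if h : ∃ i ∈ U, deltaIB Δ i B ≠ 0 then deltaIB Δ h.choose B else 0

/-- Neuron `i` is *excitatory*. -/
def Excitatory {N : ℕ} (Δ : Fin N → Fin N → ℝ) (i : Fin N) : Prop :=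
  (∀ j, 0 ≤ Δ i j) ∧ ∃ j, 0 < Δ i j

/-- Neuron `i` is *inhibitory*. -/
def Inhibitory {N : ℕ} (Δ : Fin N → Fin N → ℝ) (i : Fin N) : Prop :=
  (∀ j, Δ i j ≤ 0) ∧ ∃ j, Δ i j < 0

/-- Neuron `i` is *mixed*. -/
def Mixed {N : ℕ} (Δ : Fin N → Fin N → ℝ) (i : Fin N) : Prop :=
  (∃ j, 0 < Δ i j) ∧ ∃ j, Δ i j < 0

/-- The image of a homogeneous part `B` under the unit bijection `φ`: the union of the
images of the units of `P` contained in `B`. -/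
def partImage {N N' : ℕ} (P : Set (Set (Fin N))) (φ : Set (Fin N) → Set (Fin N'))
    (B : Set (Fin N)) : Set (Fin N') :=
  {i' | ∃ U ∈ P, U ⊆ B ∧ i' ∈ φ U}

/-- The networks `(F, Δ)` on `Fin N` and `(F', Δ')` on `Fin N'` are *synaptically
equivalent*: there are partitions of each set of neurons into synaptical units and a
bijection `φ` between them preserving homogeneous parts, inter-unit weights, and
intrinsic dynamics labels. -/
def SynEquiv {α : Type*} {N N' : ℕ} (F : Fin N → α) (Δ : Fin N → Fin N → ℝ)
    (F' : Fin N' → α) (Δ' : Fin N' → Fin N' → ℝ) : Prop :=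
  ∃ (P : Set (Set (Fin N))) (P' : Set (Set (Fin N')))
    (φ : Set (Fin N) → Set (Fin N')),
    (∀ U ∈ P, IsSynapticalUnit F Δ U) ∧ P.PairwiseDisjoint id ∧ ⋃₀ P = Set.univ ∧
    (∀ U' ∈ P', IsSynapticalUnit F' Δ' U') ∧ P'.PairwiseDisjoint id ∧
      ⋃₀ P' = Set.univ ∧
    Set.BijOn φ P P' ∧
    (∀ U ∈ P, ∀ V ∈ P,
      ((∃ A, IsHomPart F Δ A ∧ U ⊆ A ∧ V ⊆ A) ↔
        (∃ A', IsHomPart F' Δ' A' ∧ φ U ⊆ A' ∧ φ V ⊆ A'))) ∧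
    (∀ U ∈ P, ∀ B, IsHomPart F Δ B →
      deltaUB Δ U B = deltaUB Δ' (φ U) (partImage P φ B)) ∧
    (∀ U ∈ P, ∀ i ∈ U, ∀ i' ∈ φ U, F i = F' i')

/-- The labels of the *split network* obtained by splitting the mixed neuron `i`. -/
def splitF {α : Type*} {N : ℕ} (F : Fin N → α) (i : Fin N) : Fin (N + 1) → α :=
  fun j => if hj : (j : ℕ) < N then F ⟨j, hj⟩ else F i

/-- The synaptic actions of the *split network* obtained by splitting the mixed neuron
`i`: neuron `i` keeps the positive parts of its actions, the new neuron `N` gets the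
negative parts, and the new neuron receives exactly what `i` receives. -/
def splitΔ {N : ℕ} (Δ : Fin N → Fin N → ℝ) (i : Fin N) :
    Fin (N + 1) → Fin (N + 1) → ℝ := fun j h =>
  if hj : (j : ℕ) < N then
    if hh : (h : ℕ) < N then
      if (⟨j, hj⟩ : Fin N) = i then max (Δ i ⟨h, hh⟩) 0 else Δ ⟨j, hj⟩ ⟨h, hh⟩
    else
      if (⟨j, hj⟩ : Fin N) = i then 0 else Δ ⟨j, hj⟩ i
  else
    if hh : (h : ℕ) < N then
      if (⟨h, hh⟩ : Fin N) = i then 0 else min (Δ i ⟨h, hh⟩) 0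
    else 0

/-! Inside a homogeneous part `A` all synaptic actions vanish, so every neuron `i` of a
unit-candidate `U ⊆ A` acts on some neuron `g i` outside `A`. If `g i` and `g j` are
structurally identical, then `i` acts on `g j` as it does on `g i`, so both `i` and `j`
act on the outside neuron `g j`, forcing `i = j`. Hence `i ↦ [g i]` embeds `U` into the
homogeneous parts other than `A`. -/

section

variable {α : Type*} {N : ℕ} {F : Fin N → α} {Δ : Fin N → Fin N → ℝ}

theorem structId_equivalence : Equivalence (StructId F Δ) where
  refl _ := Or.inl rfl
  symm := by
    rintro i j (rfl | ⟨hF, hij, hji, hout⟩)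
    · exact Or.inl rfl
    · exact Or.inr ⟨hF.symm, hji, hij, fun h hj hi => (hout h hi hj).symm⟩
  trans := by
    rintro i j k (rfl | ⟨hF, hij, hji, hout⟩) hjk
    · exact hjk
    rcases hjk with rfl | ⟨hF', hjk, hkj, hout'⟩
    · exact Or.inr ⟨hF, hij, hji, hout⟩
    by_cases hik : i = k
    · exact Or.inl hik
    refine Or.inr ⟨hF.trans hF', ?_, ?_, fun h hi hk => ?_⟩
    · by_cases hij' : i = j
      · exact hij' ▸ hjk
      · rwa [← hout' i hij' hik]
    · by_cases hkj : k = j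
      · exact hkj ▸ hji
      · rwa [hout k (Ne.symm hik) hkj]
    · by_cases hj : h = j
      · rw [hj, hji, hjk]
      · rw [hout h hi hj, hout' h hj hk]

theorem StructId.delta_eq {i j h : Fin N} (hij : StructId F Δ i j) (hi : h ≠ i)
    (hj : h ≠ j) : Δ h i = Δ h j := by
  rcases hij with rfl | ⟨-, -, -, hout⟩
  · rfl
  · exact hout h hi hj

theorem IsHomPart.structId {A : Set (Fin N)} (hA : IsHomPart F Δ A) {i j : Fin N}
    (hi : i ∈ A) (hj : j ∈ A) : StructId F Δ i j := by
  obtain ⟨i₀, rfl⟩ := hA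
  exact structId_equivalence.trans (structId_equivalence.symm hi) hj

theorem IsHomPart.delta_eq_zero (hdiag : ∀ i, Δ i i = 0) {A : Set (Fin N)}
    (hA : IsHomPart F Δ A) {i j : Fin N} (hi : i ∈ A) (hj : j ∈ A) : Δ i j = 0 := by
  rcases hA.structId hi hj with rfl | ⟨-, hij, -⟩
  · exact hdiag i
  · exact hij

theorem IsHomPart.notMem_of_delta_ne_zero (hdiag : ∀ i, Δ i i = 0) {A : Set (Fin N)}
    (hA : IsHomPart F Δ A) {i j : Fin N} (hi : i ∈ A) (hij : Δ i j ≠ 0) : j ∉ A :=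
  fun hj => hij (hA.delta_eq_zero hdiag hi hj)

theorem finite_setOf_isHomPart : {A : Set (Fin N) | IsHomPart F Δ A}.Finite :=
  (Set.finite_range fun i => {j | StructId F Δ i j}).subset fun _ ⟨i, hA⟩ => ⟨i, hA.symm⟩

theorem UnitCandidate.eq_of_structId (hdiag : ∀ i, Δ i i = 0) {A U : Set (Fin N)}
    (hA : IsHomPart F Δ A) (hU : UnitCandidate Δ A U) {i j a b : Fin N} (hi : i ∈ U)
    (hj : j ∈ U) (hia : Δ i a ≠ 0) (hjb : Δ j b ≠ 0) (hab : StructId F Δ a b) : i = j := by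
  have hiA := hU.1 hi
  have hbA := hA.notMem_of_delta_ne_zero hdiag (hU.1 hj) hjb
  have hib : Δ i b ≠ 0 := by
    rwa [← hab.delta_eq (fun h => hA.notMem_of_delta_ne_zero hdiag hiA hia (h ▸ hiA))
      fun h => hbA (h ▸ hiA)]
  exact hU.2 b hbA i hi j hj hib hjb

theorem UnitCandidate.ncard_le_ncard_setOf_isHomPart_sub_one (hdiag : ∀ i, Δ i i = 0)
    (hnind : ∀ i, ∃ j, Δ i j ≠ 0) {A U : Set (Fin N)} (hA : IsHomPart F Δ A)
    (hU : UnitCandidate Δ A U) : U.ncard ≤ {B | IsHomPart F Δ B}.ncard - 1 := by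
  choose g hg using hnind
  have hmaps : ∀ i ∈ U, {j | StructId F Δ (g i) j} ∈ {B | IsHomPart F Δ B} \ {A} :=
    fun i hi => ⟨⟨g i, rfl⟩, fun hgA => hA.notMem_of_delta_ne_zero hdiag (hU.1 hi) (hg i)
      (hgA ▸ structId_equivalence.refl (g i))⟩
  have hinj : Set.InjOn (fun i => {j | StructId F Δ (g i) j}) U := by
    intro i hi j hj hij
    have hgj : StructId F Δ (g i) (g j) :=
      (Set.ext_iff.mp hij (g j)).mpr (structId_equivalence.refl (g j))
    exact hU.eq_of_structId hdiag hA hi hj (hg i) (hg j) hgj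
  calc U.ncard ≤ ({B | IsHomPart F Δ B} \ {A}).ncard :=
        Set.ncard_le_ncard_of_injOn _ hmaps hinj finite_setOf_isHomPart.sdiff
    _ = {B | IsHomPart F Δ B}.ncard - 1 := Set.ncard_sdiff_singleton_of_mem hA

end

theorem synaptical_unit_card_general {α : Type*} {N : ℕ} (F : Fin N → α)
    (Δ : Fin N → Fin N → ℝ) (hdiag : ∀ i, Δ i i = 0) (hnind : ∀ i, ∃ j, Δ i j ≠ 0)
    (U : Set (Fin N)) (hU : IsSynapticalUnit F Δ U) :
    1 ≤ U.ncard ∧ U.ncard ≤ {A : Set (Fin N) | IsHomPart F Δ A}.ncard - 1 := by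
  obtain ⟨A, P, hA, hP, -, hUP⟩ := hU
  obtain ⟨hne, hcand⟩ := hP.1 U hUP
  exact ⟨(Set.ncard_pos U.toFinite).2 hne,
    hcand.ncard_le_ncard_setOf_isHomPart_sub_one hdiag hnind hA⟩

/-- every synaptical unit `U` satisfies `1 ≤ |U| ≤ l − 1`, where `l` is the
number of homogeneous parts. -/
theorem synaptical_unit_card {α : Type*} {N : ℕ} (F : Fin N → α)
    (Δ : Fin N → Fin N → ℝ) (hN : 2 ≤ N) (hdiag : ∀ i, Δ i i = 0) (hnind : ∀ i, ∃ j, Δ i j ≠ 0)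
    (U : Set (Fin N)) (hU : IsSynapticalUnit F Δ U) :
    1 ≤ U.ncard ∧ U.ncard ≤ {A : Set (Fin N) | IsHomPart F Δ A}.ncard - 1 :=
  synaptical_unit_card_general F Δ hdiag hnind U hU

end NeuralNet
end

section
/- Let U be a nonempty unit-candidate contained in a homogeneous part A of a network satisfying the standing assumptions. Then the map assigning to each homogeneous part B with Δ_{U,B} ≠ 0 the unique neuron i ∈ U with Δ_{i,B} ≠ 0 is well-defined and surjective onto U; consequently |U| ≤ #{homogeneous parts B : Δ_{U,B} ≠ 0}, and every such part B is distinct from A. (Counting argument in the proof of Proposition 'Units', part (iii).) -/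
namespace NeuralNet

open Classical

/-! `Δ_{i,B}` is `Δ i h` for any `h ∈ B`: structurally identical neurons receive the same
input from every third neuron and, as `Δ i i = 0`, none from each other. Hence `Δ_{i,A} = 0`
for `i ∈ A`, so a part `B` on which some `i ∈ U` acts differs from `A`, and the
unit-candidate condition at a neuron of `B` makes that `i` unique. A non-indifferent `i`
acts on the part of every neuron it acts on, so the map `B ↦ i` is onto `U`, and counting
its fibres gives `|U| ≤ #{B : Δ_{U,B} ≠ 0}`. -/

theorem _root_.Set.ncard_le_ncard_of_exists_rel {β γ : Type*} {s : Set β} {t : Set γ}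
    (r : β → γ → Prop) (hex : ∀ a ∈ s, ∃ b ∈ t, r a b)
    (huniq : ∀ a ∈ s, ∀ a' ∈ s, ∀ b ∈ t, r a b → r a' b → a = a')
    (ht : t.Finite := by toFinite_tac) : s.ncard ≤ t.ncard := by
  obtain rfl | ⟨a, ha⟩ := s.eq_empty_or_nonempty
  · simp
  have : Nonempty γ := let ⟨b, _⟩ := hex a ha; ⟨b⟩
  choose! f hft hrf using hex
  exact Set.ncard_le_ncard_of_injOn f hft
    (fun a ha a' ha' hf => huniq a ha a' ha' (f a) (hft a ha) (hrf a ha) (hf ▸ hrf a' ha')) ht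

section HomogeneousParts

variable {α : Type*} {N : ℕ} {F : Fin N → α} {Δ : Fin N → Fin N → ℝ}

theorem IsHomPart.eq_of_mem {A B : Set (Fin N)} (hA : IsHomPart F Δ A)
    (hB : IsHomPart F Δ B) {h : Fin N} (hhA : h ∈ A) (hhB : h ∈ B) : A = B := by
  obtain ⟨a, rfl⟩ := hA
  obtain ⟨b, rfl⟩ := hB
  have hab : StructId F Δ a b := structId_equivalence.trans hhA (structId_equivalence.symm hhB)
  ext x
  exact ⟨structId_equivalence.trans (structId_equivalence.symm hab),
    structId_equivalence.trans hab⟩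

variable (hdiag : ∀ i, Δ i i = 0)
include hdiag

theorem apply_eq_of_structId {h h' : Fin N} (hs : StructId F Δ h h') (i : Fin N) :
    Δ i h = Δ i h' := by
  rcases hs with rfl | ⟨_, hhh', hh'h, hrest⟩
  · rfl
  by_cases hi : i = h
  · subst hi; rw [hdiag, hhh']
  by_cases hi' : i = h'
  · subst hi'; rw [hdiag, hh'h]
  exact hrest i hi hi'

theorem deltaIB_eq_of_mem {B : Set (Fin N)} (hB : IsHomPart F Δ B) {h : Fin N} (hh : h ∈ B)
    (i : Fin N) : deltaIB Δ i B = Δ i h := by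
  obtain ⟨b, rfl⟩ := hB
  have hne : Set.Nonempty {j | StructId F Δ b j} := ⟨h, hh⟩
  rw [deltaIB, dif_pos hne]
  exact apply_eq_of_structId hdiag
    (structId_equivalence.trans (structId_equivalence.symm hne.choose_spec) hh) i

theorem deltaIB_eq_zero_of_mem {B : Set (Fin N)} (hB : IsHomPart F Δ B) {i : Fin N}
    (hi : i ∈ B) : deltaIB Δ i B = 0 :=
  (deltaIB_eq_of_mem hdiag hB hi i).trans (hdiag i)

theorem exists_isHomPart_deltaIB_ne_zero {i j : Fin N} (hij : Δ i j ≠ 0) :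
    ∃ B, IsHomPart F Δ B ∧ deltaIB Δ i B ≠ 0 :=
  ⟨{k | StructId F Δ j k}, ⟨j, rfl⟩, by
    rwa [deltaIB_eq_of_mem hdiag ⟨j, rfl⟩ (structId_equivalence.refl j) i]⟩

theorem UnitCandidate.eq_of_deltaIB_ne_zero {A U B : Set (Fin N)} (hA : IsHomPart F Δ A)
    (hU : UnitCandidate Δ A U) (hB : IsHomPart F Δ B) {i j : Fin N} (hi : i ∈ U)
    (hj : j ∈ U) (hiB : deltaIB Δ i B ≠ 0) (hjB : deltaIB Δ j B ≠ 0) : i = j := by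
  obtain ⟨b, rfl⟩ := hB
  have hb : b ∈ {k | StructId F Δ b k} := structId_equivalence.refl b
  have hbA : b ∉ A := fun hbA =>
    hiB (deltaIB_eq_zero_of_mem hdiag ⟨b, rfl⟩ (hA.eq_of_mem ⟨b, rfl⟩ hbA hb ▸ hU.1 hi))
  rw [deltaIB_eq_of_mem hdiag ⟨b, rfl⟩ hb] at hiB hjB
  exact hU.2 b hbA i hi j hj hiB hjB

end HomogeneousParts

theorem exists_deltaIB_ne_zero_of_deltaUB_ne_zero {N : ℕ} {Δ : Fin N → Fin N → ℝ}
    {U B : Set (Fin N)} (h : deltaUB Δ U B ≠ 0) : ∃ i ∈ U, deltaIB Δ i B ≠ 0 := by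
  by_contra hnone
  exact h (dif_neg hnone)

theorem deltaUB_ne_zero_of_deltaIB_ne_zero {N : ℕ} {Δ : Fin N → Fin N → ℝ}
    {U B : Set (Fin N)} {i : Fin N} (hi : i ∈ U) (hiB : deltaIB Δ i B ≠ 0) :
    deltaUB Δ U B ≠ 0 := by
  have hex : ∃ i ∈ U, deltaIB Δ i B ≠ 0 := ⟨i, hi, hiB⟩
  rw [deltaUB, dif_pos hex]
  exact hex.choose_spec.2

theorem unit_counting_general {α : Type*} {N : ℕ} (F : Fin N → α)
    (Δ : Fin N → Fin N → ℝ) (hdiag : ∀ i, Δ i i = 0) (hnind : ∀ i, ∃ j, Δ i j ≠ 0)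
    (A U : Set (Fin N)) (hA : IsHomPart F Δ A) (hUA : UnitCandidate Δ A U) :
    (∀ B, IsHomPart F Δ B → deltaUB Δ U B ≠ 0 →
      ∃! i, i ∈ U ∧ deltaIB Δ i B ≠ 0) ∧
    (∀ i ∈ U, ∃ B, IsHomPart F Δ B ∧ deltaUB Δ U B ≠ 0 ∧ deltaIB Δ i B ≠ 0) ∧
    U.ncard ≤ {B : Set (Fin N) | IsHomPart F Δ B ∧ deltaUB Δ U B ≠ 0}.ncard ∧
    (∀ B, IsHomPart F Δ B → deltaUB Δ U B ≠ 0 → B ≠ A) := by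
  have onto : ∀ i ∈ U, ∃ B, IsHomPart F Δ B ∧ deltaUB Δ U B ≠ 0 ∧ deltaIB Δ i B ≠ 0 := by
    intro i hi
    obtain ⟨j, hij⟩ := hnind i
    obtain ⟨B, hB, hiB⟩ := exists_isHomPart_deltaIB_ne_zero hdiag hij
    exact ⟨B, hB, deltaUB_ne_zero_of_deltaIB_ne_zero hi hiB, hiB⟩
  refine ⟨fun B hB hUB => ?_, onto, ?_, fun B _ hUB => ?_⟩
  · obtain ⟨i, hi, hiB⟩ := exists_deltaIB_ne_zero_of_deltaUB_ne_zero hUB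
    exact ⟨i, ⟨hi, hiB⟩, fun j ⟨hj, hjB⟩ =>
      hUA.eq_of_deltaIB_ne_zero hdiag hA hB hj hi hjB hiB⟩
  · exact Set.ncard_le_ncard_of_exists_rel (fun i B => deltaIB Δ i B ≠ 0)
      (fun i hi => (onto i hi).imp fun B ⟨hB, hUB, hiB⟩ => ⟨⟨hB, hUB⟩, hiB⟩)
      (fun i hi j hj B ⟨hB, _⟩ hiB hjB => hUA.eq_of_deltaIB_ne_zero hdiag hA hB hi hj hiB hjB)
  · obtain ⟨i, hi, hiB⟩ := exists_deltaIB_ne_zero_of_deltaUB_ne_zero hUB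
    rintro rfl
    exact hiB (deltaIB_eq_zero_of_mem hdiag hA (hUA.1 hi))

/-- for a nonempty unit-candidate `U ⊆ A`, the map sending each homogeneous
part `B` with `Δ_{U,B} ≠ 0` to the unique `i ∈ U` with `Δ_{i,B} ≠ 0` is well-defined and
surjective onto `U`; hence `|U| ≤ #{B : Δ_{U,B} ≠ 0}`, and every such `B` differs
from `A`. -/
theorem unit_counting {α : Type*} {N : ℕ} (F : Fin N → α)
    (Δ : Fin N → Fin N → ℝ) (hN : 2 ≤ N) (hdiag : ∀ i, Δ i i = 0) (hnind : ∀ i, ∃ j, Δ i j ≠ 0)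
    (A U : Set (Fin N)) (hA : IsHomPart F Δ A) (hUA : UnitCandidate Δ A U)
    (hUne : U.Nonempty) :
    (∀ B, IsHomPart F Δ B → deltaUB Δ U B ≠ 0 →
      ∃! i, i ∈ U ∧ deltaIB Δ i B ≠ 0) ∧
    (∀ i ∈ U, ∃ B, IsHomPart F Δ B ∧ deltaUB Δ U B ≠ 0 ∧ deltaIB Δ i B ≠ 0) ∧
    U.ncard ≤ {B : Set (Fin N) | IsHomPart F Δ B ∧ deltaUB Δ U B ≠ 0}.ncard ∧
    (∀ B, IsHomPart F Δ B → deltaUB Δ U B ≠ 0 → B ≠ A) :=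
  unit_counting_general F Δ hdiag hnind A U hA hUA

end NeuralNet
end
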